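/- arXiv:1002.3100 — 7 statements merged into one kernel-verified Lean document; each statement's English description precedes it below -/
import Mathlib

section
/- Let q be a nonzero complex number, A the algebra of q-difference operators generated by Z, D with DZ = qZD, acting on Laurent polynomials by (Zf)(z)=zf(z), (Df)(z)=f(qz). Setting ē_i = Z^i D, the elements ē_i satisfy: ē_{n+3}ē_m - (1+q+q^{-1})ē_{n+2}ē_{m+1} + (1+q+q^{-1})ē_{n+1}ē_{m+2} - ē_n ē_{m+3} = -ē_{m+3}ē_n + (1+q+q^{-1})ē_{m+2}ē_{n+1} - (1+q+q^{-1})ē_{m+1}ē_{n+2} + ē_m ē_{n+3} for all integers m, n. -/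
/-- The operator `ē_i = Z^i D` of the algebra of `q`-difference operators
(with `DZ = qZD`, `(Zf)(z) = z f(z)`, `(Df)(z) = f(qz)`), acting on Laurent
polynomials described by their coefficient sequences: the coefficient of `z^n`
in `ē_i f` is `q^(n-i)` times the coefficient of `z^(n-i)` in `f`. -/
noncomputable def ebar (q : ℂ) (i : ℤ) (c : ℤ → ℂ) : ℤ → ℂ :=
  fun n => q ^ (n - i) * c (n - i)

/-- The elements `ē_i = Z^i D` satisfy the cubic exchange relations. -/
theorem stmt0 (q : ℂ) (hq : q ≠ 0) (m n : ℤ) (c : ℤ → ℂ) :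
    ebar q (n + 3) (ebar q m c) - (1 + q + q⁻¹) • ebar q (n + 2) (ebar q (m + 1) c)
      + (1 + q + q⁻¹) • ebar q (n + 1) (ebar q (m + 2) c) - ebar q n (ebar q (m + 3) c)
    = -(ebar q (m + 3) (ebar q n c)) + (1 + q + q⁻¹) • ebar q (m + 2) (ebar q (n + 1) c)
      - (1 + q + q⁻¹) • ebar q (m + 1) (ebar q (n + 2) c) + ebar q m (ebar q (n + 3) c) := by
  funext x
  simp only [ebar, Pi.add_apply, Pi.sub_apply, Pi.neg_apply, Pi.smul_apply, smul_eq_mul]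
  have key : ∀ i j : ℤ, x - i - j = x - m - n - 3 → i + j = m + n + 3 →
      q ^ (x - i) * (q ^ (x - i - j) * c (x - i - j))
        = q ^ (x - m - n - 3) * q ^ (x - m - n - 3) * q ^ (j) * c (x - m - n - 3) := by
    intro i j h1 h2
    rw [h1]
    have : x - i = (x - m - n - 3) + j := by omega
    rw [this, zpow_add₀ hq]
    ring
  rw [key (n+3) m (by omega) (by omega), key (n+2) (m+1) (by omega) (by omega),
      key (n+1) (m+2) (by omega) (by omega), key n (m+3) (by omega) (by omega),
      key (m+3) n (by omega) (by omega), key (m+2) (n+1) (by omega) (by omega),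
      key (m+1) (n+2) (by omega) (by omega), key m (n+3) (by omega) (by omega)]
  have e1 : ∀ k : ℤ, q ^ (m + k) = q ^ m * q ^ k := fun k => zpow_add₀ hq _ _
  have e2 : ∀ k : ℤ, q ^ (n + k) = q ^ n * q ^ k := fun k => zpow_add₀ hq _ _
  rw [show m+1 = m+(1:ℤ) from rfl, show m+2 = m+(2:ℤ) from rfl, show m+3 = m+(3:ℤ) from rfl,
     show n+1 = n+(1:ℤ) from rfl, show n+2 = n+(2:ℤ) from rfl, show n+3 = n+(3:ℤ) from rfl,
     e1, e1, e1, e2, e2, e2]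
  have h1 : q ^ (1:ℤ) = q := zpow_one q
  have h2 : q ^ (2:ℤ) = q * q := by rw [show (2:ℤ) = 1+1 by norm_num, zpow_add₀ hq, zpow_one]
  have h3 : q ^ (3:ℤ) = q * q * q := by rw [show (3:ℤ) = 2+1 by norm_num, zpow_add₀ hq, zpow_one, h2]
  rw [h1, h2, h3]
  field_simp
  ring
end

section
/- Define γ_{i,u}(z) = (1 - q₃q₁^i u/z)(1 - q₂q₁^i u/z) / ((1 - q₁^{i-1}u/z)(1 - q₁^i u/z)) with q₁q₂q₃ = 1. Then for all integers a_s, a_t and parameters u_s, u_t (such that all values are defined): γ_{a_t,u_t}(q₁^{a_s-1}u_s) · γ_{a_s-1,u_s}(q₁^{a_t}u_t) = γ_{a_s,u_s}(q₁^{a_t}u_t) · γ_{a_t+1,u_t}(q₁^{a_s-1}u_s). -/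
/-!
`γ_{i,u}(z)` depends on `i, u, z` only through the ratio `x = q₁^i u / z`, and in terms of `x`
the exchange identity reads `γ(x) γ(1/x) = γ(q₁/x) γ(q₁x)`. Behind it: using `q₁q₂q₃ = 1`,
`γ(x) / γ(q₁x) = φ(x) := ∏ᵢ (1 - qᵢx) / ∏ᵢ (1 - x/qᵢ)`, and `φ(x) φ(1/x) = 1`.
-/

noncomputable def gam (q₁ q₂ q₃ : ℂ) (i : ℤ) (u z : ℂ) : ℂ :=
  ((1 - q₃ * q₁ ^ i * u / z) * (1 - q₂ * q₁ ^ i * u / z)) /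
    ((1 - q₁ ^ (i - 1) * u / z) * (1 - q₁ ^ i * u / z))

section

variable {K : Type*} [Field K]

def gammaRatio (q₁ q₂ q₃ x : K) : K :=
  (1 - q₃ * x) * (1 - q₂ * x) / ((1 - x / q₁) * (1 - x))

theorem gammaRatio_mul_gammaRatio_inv {q₁ q₂ q₃ : K} (hq : q₁ * q₂ * q₃ = 1) {x : K}
    (hx : (1 - x / q₁) * (1 - x) ≠ 0) (hqx : (1 - x) * (1 - q₁ * x) ≠ 0) :
    gammaRatio q₁ q₂ q₃ x * gammaRatio q₁ q₂ q₃ x⁻¹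
      = gammaRatio q₁ q₂ q₃ (q₁ * x⁻¹) * gammaRatio q₁ q₂ q₃ (q₁ * x) := by
  rcases eq_or_ne x 0 with rfl | hx₀
  · simp [gammaRatio]
  have hq₁₂ : q₁ * q₂ ≠ 0 := left_ne_zero_of_mul_eq_one hq
  have hq₁ : q₁ ≠ 0 := left_ne_zero_of_mul hq₁₂
  have hq₂ : q₂ ≠ 0 := right_ne_zero_of_mul hq₁₂
  obtain rfl : q₃ = (q₁ * q₂)⁻¹ := eq_inv_of_mul_eq_one_right hq
  have hxq₁ : x ≠ q₁ := by rintro rfl; simp [hq₁] at hx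
  have hx₁ : x ≠ 1 := by rintro rfl; simp at hx
  have hq₁x : q₁ * x ≠ 1 := by intro h; simp [h] at hqx
  unfold gammaRatio
  field_simp [sub_ne_zero.2 hxq₁, sub_ne_zero.2 hxq₁.symm, sub_ne_zero.2 hx₁, sub_ne_zero.2 hq₁x]
  ring

end

theorem gam_eq_gammaRatio {q₁ q₂ q₃ : ℂ} (h₁ : q₁ ≠ 0) (i : ℤ) (u z : ℂ) :
    gam q₁ q₂ q₃ i u z = gammaRatio q₁ q₂ q₃ (q₁ ^ i * u / z) := by
  rw [gam, gammaRatio, zpow_sub_one₀ h₁]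
  ring

theorem stmt4_general (q₁ q₂ q₃ : ℂ)
    (hq : q₁ * q₂ * q₃ = 1) (aₛ aₜ : ℤ) (uₛ uₜ : ℂ)
    (hd1 : (1 - q₁ ^ (aₜ - 1) * uₜ / (q₁ ^ (aₛ - 1) * uₛ))
            * (1 - q₁ ^ aₜ * uₜ / (q₁ ^ (aₛ - 1) * uₛ)) ≠ 0)
    (hd4 : (1 - q₁ ^ aₜ * uₜ / (q₁ ^ (aₛ - 1) * uₛ))
            * (1 - q₁ ^ (aₜ + 1) * uₜ / (q₁ ^ (aₛ - 1) * uₛ)) ≠ 0) :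
    gam q₁ q₂ q₃ aₜ uₜ (q₁ ^ (aₛ - 1) * uₛ) * gam q₁ q₂ q₃ (aₛ - 1) uₛ (q₁ ^ aₜ * uₜ)
      = gam q₁ q₂ q₃ aₛ uₛ (q₁ ^ aₜ * uₜ) * gam q₁ q₂ q₃ (aₜ + 1) uₜ (q₁ ^ (aₛ - 1) * uₛ) := by
  have h₁ : q₁ ≠ 0 := left_ne_zero_of_mul (left_ne_zero_of_mul_eq_one hq)
  set x := q₁ ^ aₜ * uₜ / (q₁ ^ (aₛ - 1) * uₛ)
  have hx₁ : q₁ ^ (aₜ - 1) * uₜ / (q₁ ^ (aₛ - 1) * uₛ) = x / q₁ := by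
    rw [zpow_sub_one₀ h₁]; ring
  have hx₂ : q₁ ^ (aₛ - 1) * uₛ / (q₁ ^ aₜ * uₜ) = x⁻¹ := (inv_div _ _).symm
  have hx₃ : q₁ ^ aₛ * uₛ / (q₁ ^ aₜ * uₜ) = q₁ * x⁻¹ := by
    rw [← hx₂, ← sub_add_cancel aₛ 1, zpow_add_one₀ h₁, add_sub_cancel_right]; ring
  have hx₄ : q₁ ^ (aₜ + 1) * uₜ / (q₁ ^ (aₛ - 1) * uₛ) = q₁ * x := by
    rw [zpow_add_one₀ h₁]; ring
  rw [hx₁] at hd1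
  rw [hx₄] at hd4
  simp only [gam_eq_gammaRatio h₁, hx₂, hx₃, hx₄]
  exact gammaRatio_mul_gammaRatio_inv hq hd1 hd4

/-- The exchange identity
`γ_{aₜ,uₜ}(q₁^{aₛ-1}uₛ) γ_{aₛ-1,uₛ}(q₁^{aₜ}uₜ)
  = γ_{aₛ,uₛ}(q₁^{aₜ}uₜ) γ_{aₜ+1,uₜ}(q₁^{aₛ-1}uₛ)`,
valid whenever all four values are defined. -/
theorem stmt4 (q₁ q₂ q₃ : ℂ) (h₁ : q₁ ≠ 0) (h₂ : q₂ ≠ 0) (h₃ : q₃ ≠ 0)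
    (hq : q₁ * q₂ * q₃ = 1) (aₛ aₜ : ℤ) (uₛ uₜ : ℂ) (huₛ : uₛ ≠ 0) (huₜ : uₜ ≠ 0)
    (hd1 : (1 - q₁ ^ (aₜ - 1) * uₜ / (q₁ ^ (aₛ - 1) * uₛ))
            * (1 - q₁ ^ aₜ * uₜ / (q₁ ^ (aₛ - 1) * uₛ)) ≠ 0)
    (hd2 : (1 - q₁ ^ (aₛ - 2) * uₛ / (q₁ ^ aₜ * uₜ))
            * (1 - q₁ ^ (aₛ - 1) * uₛ / (q₁ ^ aₜ * uₜ)) ≠ 0)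
    (hd3 : (1 - q₁ ^ (aₛ - 1) * uₛ / (q₁ ^ aₜ * uₜ))
            * (1 - q₁ ^ aₛ * uₛ / (q₁ ^ aₜ * uₜ)) ≠ 0)
    (hd4 : (1 - q₁ ^ aₜ * uₜ / (q₁ ^ (aₛ - 1) * uₛ))
            * (1 - q₁ ^ (aₜ + 1) * uₜ / (q₁ ^ (aₛ - 1) * uₛ)) ≠ 0) :
    gam q₁ q₂ q₃ aₜ uₜ (q₁ ^ (aₛ - 1) * uₛ) * gam q₁ q₂ q₃ (aₛ - 1) uₛ (q₁ ^ aₜ * uₜ)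
      = gam q₁ q₂ q₃ aₛ uₛ (q₁ ^ aₜ * uₜ) * gam q₁ q₂ q₃ (aₜ + 1) uₜ (q₁ ^ (aₛ - 1) * uₛ) :=
  stmt4_general q₁ q₂ q₃ hq aₛ aₜ uₛ uₜ hd1 hd4
end

section
/- On the vector representation V(u), the operators e(z), f(z), ψ^±(z) defined by (1-q₁)e(z)[u]_i = δ(q₁^i u/z)[u]_{i+1}, -(1-q₁^{-1})f(z)[u]_i = δ(q₁^{i-1}u/z)[u]_{i-1}, and ψ^±(z)[u]_i = γ^±_{i,u}(z)[u]_i satisfy the relation [e(z), f(w)][u]_i = (δ(z/w)/g(1,1)) (ψ^+(z) - ψ^-(z))[u]_i, where g(z,w)=(z-q₁w)(z-q₂w)(z-q₃w). -/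
/-- `e_m` on `V(u)`: `e_m [u]_j = (1-q₁)⁻¹ (q₁^j u)^m [u]_{j+1}`,
written on coefficient sequences. -/
noncomputable def Eop (q₁ u : ℂ) (m : ℤ) (c : ℤ → ℂ) : ℤ → ℂ :=
  fun i => (1 - q₁)⁻¹ * (q₁ ^ (i - 1) * u) ^ m * c (i - 1)

/-- `f_m` on `V(u)`: `f_m [u]_j = -(1-q₁⁻¹)⁻¹ (q₁^{j-1} u)^m [u]_{j-1}`. -/
noncomputable def Fop (q₁ u : ℂ) (m : ℤ) (c : ℤ → ℂ) : ℤ → ℂ :=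
  fun i => -(1 - q₁⁻¹)⁻¹ * (q₁ ^ i * u) ^ m * c (i + 1)

/-- The basis vector `[u]_i` of `V(u)`. -/
noncomputable def bas (i : ℤ) : ℤ → ℂ := fun n => if n = i then 1 else 0

/-- Residue `A₁ = res_{z=q₁^{i-1}u} γ_{i,u}(z) dz/z` of
`γ_{i,u}(z) = (z - q₃q₁^i u)(z - q₂q₁^i u)/((z - q₁^{i-1}u)(z - q₁^i u))`. -/
noncomputable def Ares₁ (q₁ q₂ q₃ u : ℂ) (i : ℤ) : ℂ :=
  (q₁ ^ (i - 1) * u - q₃ * q₁ ^ i * u) * (q₁ ^ (i - 1) * u - q₂ * q₁ ^ i * u)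
    / ((q₁ ^ (i - 1) * u - q₁ ^ i * u) * (q₁ ^ (i - 1) * u))

/-- Residue `A₂ = res_{z=q₁^{i}u} γ_{i,u}(z) dz/z`. -/
noncomputable def Ares₂ (q₁ q₂ q₃ u : ℂ) (i : ℤ) : ℂ :=
  (q₁ ^ i * u - q₃ * q₁ ^ i * u) * (q₁ ^ i * u - q₂ * q₁ ^ i * u)
    / ((q₁ ^ i * u - q₁ ^ (i - 1) * u) * (q₁ ^ i * u))

/-- Coefficient of `z^{-j}` in `ψ⁺(z)` acting on `[u]_i`, i.e. in the
expansion `γ⁺_{i,u}(z)` of `γ_{i,u}` at `z = ∞` (using `γ_{i,u}(0) = 1` and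
the partial fraction decomposition `γ = 1 + A₁ z/(z-p₁) + A₂ z/(z-p₂)`). -/
noncomputable def psiPlusCoef (q₁ q₂ q₃ u : ℂ) (i j : ℤ) : ℂ :=
  if 0 ≤ j then (if j = 0 then 1 else 0)
      + Ares₁ q₁ q₂ q₃ u i * (q₁ ^ (i - 1) * u) ^ j
      + Ares₂ q₁ q₂ q₃ u i * (q₁ ^ i * u) ^ j
  else 0

/-- Coefficient of `z^{-j}` in `ψ⁻(z)` acting on `[u]_i`, i.e. in the
expansion `γ⁻_{i,u}(z)` of `γ_{i,u}` at `z = 0`. -/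
noncomputable def psiMinusCoef (q₁ q₂ q₃ u : ℂ) (i j : ℤ) : ℂ :=
  if j ≤ 0 then
      (if j = 0 then 1
       else -(Ares₁ q₁ q₂ q₃ u i * (q₁ ^ (i - 1) * u) ^ j
              + Ares₂ q₁ q₂ q₃ u i * (q₁ ^ i * u) ^ j))
  else 0

lemma ares1_eq (q₁ q₂ q₃ u : ℂ) (h₁ : q₁ ≠ 0) (h₁' : q₁ ≠ 1) (hq : q₁ * q₂ * q₃ = 1)
    (hu : u ≠ 0) (i : ℤ) :
    Ares₁ q₁ q₂ q₃ u i = q₁ * (1 - q₂) * (1 - q₃) / (1 - q₁) := by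
  have e : q₁ ^ i = q₁ * q₁ ^ (i - 1) := by
    rw [mul_comm, ← zpow_add_one₀ h₁]; congr 1; omega
  have h1 : (1 : ℂ) - q₁ ≠ 0 := sub_ne_zero.2 (Ne.symm h₁')
  rw [Ares₁, e]
  generalize hp : q₁ ^ (i - 1) = p
  have hp0 : p ≠ 0 := hp ▸ zpow_ne_zero _ h₁
  have hd : (p * u - q₁ * p * u) * (p * u) ≠ 0 := by
    have : (p * u - q₁ * p * u) * (p * u) = p ^ 2 * u ^ 2 * (1 - q₁) := by ring
    rw [this]
    exact mul_ne_zero (mul_ne_zero (pow_ne_zero _ hp0) (pow_ne_zero _ hu)) h1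
  rw [div_eq_div_iff hd h1]
  linear_combination ((1:ℂ) - q₁) * (q₁ - 1) * p ^ 2 * u ^ 2 * hq

lemma ares2_eq (q₁ q₂ q₃ u : ℂ) (h₁ : q₁ ≠ 0) (h₁' : q₁ ≠ 1)
    (hu : u ≠ 0) (i : ℤ) :
    Ares₂ q₁ q₂ q₃ u i = -(q₁ * (1 - q₂) * (1 - q₃) / (1 - q₁)) := by
  have e : q₁ ^ i = q₁ * q₁ ^ (i - 1) := by
    rw [mul_comm, ← zpow_add_one₀ h₁]; congr 1; omega
  have h1 : (1 : ℂ) - q₁ ≠ 0 := sub_ne_zero.2 (Ne.symm h₁')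
  rw [Ares₂, e]
  generalize hp : q₁ ^ (i - 1) = p
  have hp0 : p ≠ 0 := hp ▸ zpow_ne_zero _ h₁
  have hd : (q₁ * p * u - p * u) * (q₁ * p * u) ≠ 0 := by
    have : (q₁ * p * u - p * u) * (q₁ * p * u) = -(q₁ * p ^ 2 * u ^ 2 * (1 - q₁)) := by ring
    rw [this]
    exact neg_ne_zero.2 (mul_ne_zero (mul_ne_zero (mul_ne_zero h₁ (pow_ne_zero _ hp0))
      (pow_ne_zero _ hu)) h1)
  rw [← neg_div, div_eq_div_iff hd h1]
  ring

/-- Coefficientwise (in `z^{-n} w^{-m}`) form of the relation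
`[e(z), f(w)][u]_i = (δ(z/w)/g(1,1))(ψ⁺(z) - ψ⁻(z))[u]_i` on `V(u)`:
the coefficient of `z^{-n}w^{-m}` on the left is `[e_n, f_m][u]_i`, and on the
right it is `g(1,1)⁻¹ (ψ⁺_{n+m} - ψ⁻_{n+m})[u]_i`. -/
theorem stmt7 (q₁ q₂ q₃ u : ℂ) (h₁ : q₁ ≠ 0) (h₂ : q₂ ≠ 0) (h₃ : q₃ ≠ 0)
    (h₁' : q₁ ≠ 1) (h₂' : q₂ ≠ 1) (h₃' : q₃ ≠ 1) (hq : q₁ * q₂ * q₃ = 1)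
    (hu : u ≠ 0) (n m i : ℤ) :
    Eop q₁ u n (Fop q₁ u m (bas i)) - Fop q₁ u m (Eop q₁ u n (bas i))
      = (((1 - q₁) * (1 - q₂) * (1 - q₃))⁻¹
          * (psiPlusCoef q₁ q₂ q₃ u i (n + m) - psiMinusCoef q₁ q₂ q₃ u i (n + m)))
        • bas i := by
  have h1 : (1 : ℂ) - q₁ ≠ 0 := sub_ne_zero.2 (Ne.symm h₁')
  have h2 : (1 : ℂ) - q₂ ≠ 0 := sub_ne_zero.2 (Ne.symm h₂')
  have h3 : (1 : ℂ) - q₃ ≠ 0 := sub_ne_zero.2 (Ne.symm h₃')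
  have h1i : (1 : ℂ) - q₁⁻¹ ≠ 0 := by
    rw [sub_ne_zero]
    exact fun h => h₁' (by rw [← inv_inv q₁, ← h, inv_one])
  have ha : q₁ ^ (i - 1) * u ≠ 0 := mul_ne_zero (zpow_ne_zero _ h₁) hu
  have hb : q₁ ^ i * u ≠ 0 := mul_ne_zero (zpow_ne_zero _ h₁) hu
  have hA1 := ares1_eq q₁ q₂ q₃ u h₁ h₁' hq hu i
  have hA2 := ares2_eq q₁ q₂ q₃ u h₁ h₁' hu i
  -- uniform formula for ψ⁺ - ψ⁻
  have hsum : Ares₁ q₁ q₂ q₃ u i + Ares₂ q₁ q₂ q₃ u i = 0 := by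
    rw [hA1, hA2]; ring
  have key : ∀ j : ℤ, psiPlusCoef q₁ q₂ q₃ u i j - psiMinusCoef q₁ q₂ q₃ u i j
      = Ares₁ q₁ q₂ q₃ u i * (q₁ ^ (i - 1) * u) ^ j
        + Ares₂ q₁ q₂ q₃ u i * (q₁ ^ i * u) ^ j := by
    intro j
    rcases lt_trichotomy j 0 with hj | hj | hj
    · rw [psiPlusCoef, psiMinusCoef, if_neg (by omega), if_pos (by omega),
        if_neg (by omega)]
      ring
    · subst hj
      rw [psiPlusCoef, psiMinusCoef, if_pos le_rfl, if_pos le_rfl, if_pos rfl, if_pos rfl,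
        zpow_zero, zpow_zero]
      ring
    · rw [psiPlusCoef, psiMinusCoef, if_pos (by omega), if_neg (by omega),
        if_neg (by omega)]
      ring
  funext k
  simp only [Pi.sub_apply, Pi.smul_apply, smul_eq_mul, Eop, Fop, bas]
  have e1 : k - 1 + 1 = k := by ring
  have e2 : k + 1 - 1 = k := by ring
  rw [e1, e2]
  by_cases hk : k = i
  · subst hk
    rw [if_pos rfl, key, hA1, hA2, zpow_add₀ ha, zpow_add₀ hb]
    have hc : -(1 - q₁)⁻¹ * (1 - q₁⁻¹)⁻¹
        = ((1 - q₁) * (1 - q₂) * (1 - q₃))⁻¹ * (q₁ * (1 - q₂) * (1 - q₃) / (1 - q₁)) := by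
      have e0 : (1 - q₁⁻¹) = (q₁ - 1) * q₁⁻¹ := by field_simp
      have h1'' : q₁ - 1 ≠ 0 := sub_ne_zero.2 h₁'
      rw [e0]
      field_simp
      ring
    linear_combination ((q₁ ^ (k - 1) * u) ^ n * (q₁ ^ (k - 1) * u) ^ m
      - (q₁ ^ k * u) ^ n * (q₁ ^ k * u) ^ m) * hc
  · rw [if_neg hk]
    ring
end

section
/- On V(u), the relation g(z,w)e(z)e(w) = -g(w,z)e(w)e(z) holds; in fact both sides act as zero: g(z,w)e(z)e(w)[u]_i = 0 for all i, because g(q₁^{i+1}u, q₁^i u) = 0. -/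
/-- On `V(u)` the relation `g(z,w)e(z)e(w) = -g(w,z)e(w)e(z)` holds; in fact
both sides act as zero.  First conjunct: the coefficient of `z^{-n}w^{-m}` of
`g(z,w)e(z)e(w)` kills each basis vector `[u]_i`.  Second conjunct: the key
scalar fact `g(q₁^{i+1}u, q₁^i u) = 0`. -/
theorem stmt8 (q₁ q₂ q₃ u : ℂ) (h₁ : q₁ ≠ 0) (h₂ : q₂ ≠ 0) (h₃ : q₃ ≠ 0)
    (hq : q₁ * q₂ * q₃ = 1) (hu : u ≠ 0) :
    (∀ n m i : ℤ,
      Eop q₁ u (n + 3) (Eop q₁ u m (bas i))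
        - (q₁ + q₂ + q₃) • Eop q₁ u (n + 2) (Eop q₁ u (m + 1) (bas i))
        + (q₁ * q₂ + q₁ * q₃ + q₂ * q₃) • Eop q₁ u (n + 1) (Eop q₁ u (m + 2) (bas i))
        - (q₁ * q₂ * q₃) • Eop q₁ u n (Eop q₁ u (m + 3) (bas i)) = 0)
    ∧ (∀ i : ℤ,
      (q₁ ^ (i + 1) * u - q₁ * (q₁ ^ i * u)) * (q₁ ^ (i + 1) * u - q₂ * (q₁ ^ i * u))
        * (q₁ ^ (i + 1) * u - q₃ * (q₁ ^ i * u)) = 0) := by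
  have e1 : ∀ x : ℂ, x ≠ 0 → ∀ k : ℤ, x ^ (k + 1) = x ^ k * x := by
    intro x hx k; rw [zpow_add_one₀ hx]
  have e2 : ∀ x : ℂ, x ≠ 0 → ∀ k : ℤ, x ^ (k + 2) = x ^ k * x * x := by
    intro x hx k
    rw [show k + 2 = k + 1 + 1 by ring, zpow_add_one₀ hx, zpow_add_one₀ hx]
  have e3 : ∀ x : ℂ, x ≠ 0 → ∀ k : ℤ, x ^ (k + 3) = x ^ k * x * x * x := by
    intro x hx k
    rw [show k + 3 = k + 1 + 1 + 1 by ring, zpow_add_one₀ hx, zpow_add_one₀ hx,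
      zpow_add_one₀ hx]
  constructor
  · intro n m i
    funext j
    simp only [Eop, bas, Pi.add_apply, Pi.sub_apply, Pi.smul_apply, smul_eq_mul,
      Pi.zero_apply]
    have ha0 : q₁ ^ (j - 1) * u ≠ 0 := mul_ne_zero (zpow_ne_zero _ h₁) hu
    have hb0 : q₁ ^ (j - 1 - 1) * u ≠ 0 := mul_ne_zero (zpow_ne_zero _ h₁) hu
    have hab : q₁ ^ (j - 1) * u = q₁ * (q₁ ^ (j - 1 - 1) * u) := by
      rw [show (j - 1 : ℤ) = j - 1 - 1 + 1 by ring, zpow_add_one₀ h₁]; ring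
    set a : ℂ := q₁ ^ (j - 1) * u
    set b : ℂ := q₁ ^ (j - 1 - 1) * u
    clear_value a b
    have key : a * a * a - (q₁ + q₂ + q₃) * (a * a * b)
        + (q₁ * q₂ + q₁ * q₃ + q₂ * q₃) * (a * (b * b))
        - q₁ * q₂ * q₃ * (b * (b * b)) = 0 := by
      rw [hab]; ring
    rw [e3 a ha0, e2 a ha0, e1 a ha0, e3 b hb0, e2 b hb0, e1 b hb0]
    set t : ℂ := if j - 1 - 1 = i then (1 : ℂ) else 0
    linear_combination ((1 - q₁)⁻¹ * (1 - q₁)⁻¹ * a ^ n * b ^ m * t) * key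
  · intro i
    have h : q₁ ^ (i + 1) * u - q₁ * (q₁ ^ i * u) = 0 := by
      rw [zpow_add_one₀ h₁]; ring
    rw [h, zero_mul, zero_mul]
end

section
/- In the degenerate case v = 1 where the idempotent S commutes with Σᵢ Xᵢ^{±1} and Σᵢ Yᵢ^{±1} and X_iY_j = q^{-δ_{ij}}Y_jX_i, one has (ad P_{±1})^k Q₁ = (1-q^{±1})^k S (Σ_{i=1}^N X_i^{±k} Y_i) S, where P_{±1} = S(Σᵢ Xᵢ^{±1})S and Q₁ = S(Σᵢ Yᵢ)S. -/
/-!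
An idempotent `S` commuting with `B` intertwines commutators, `⁅S B S, S T S⁆ = S ⁅B, T⁆ S`,
so `ad (S (∑ Zᵢ) S)` acts on compressions `S T S` as `ad (∑ Zᵢ)` acts on `T`, where
`Zᵢ = Xᵢ^{±1}`. Since `Zᵢ` commutes with `Zⱼ` and with `Yⱼ` for `j ≠ i`, only the diagonal
terms survive, and `Yᵢ Zᵢ = d Zᵢ Yᵢ` gives `⁅Zᵢ, Zᵢᵏ Yᵢ⁆ = (1 - d) Zᵢᵏ⁺¹ Yᵢ`,
with `d = q` for `Zᵢ = Xᵢ` and `d = q⁻¹` for `Zᵢ = Xᵢ⁻¹`.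
-/

open Finset

section
attribute [local instance] LieRing.ofAssociativeRing

variable {A : Type*} [Ring A]

theorem IsIdempotentElem.lie_mul_mul {S : A} (hS : IsIdempotentElem S) {B : A}
    (hSB : Commute S B) (T : A) : ⁅S * B * S, S * T * S⁆ = S * ⁅B, T⁆ * S := by
  have hBS : S * B * S = B * S := by rw [hSB.eq, mul_assoc, hS.eq]
  have hSS : ∀ x, x * S * S = x * S := fun x => by rw [mul_assoc, hS.eq]
  have hSB_right : ∀ x, x * S * B = x * B * S := fun x => by rw [mul_assoc, hSB.eq, ← mul_assoc]
  calc ⁅S * B * S, S * T * S⁆ = B * S * T * S - S * T * B * S := by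
        rw [Ring.lie_def, hBS]; simp only [← mul_assoc, hSS, hSB_right]
    _ = S * ⁅B, T⁆ * S := by rw [Ring.lie_def, ← hSB.eq]; noncomm_ring

theorem Units.mul_inv_eq_smul_of_mul_eq_smul {R : Type*} [CommSemiring R] [Algebra R A]
    (u : Aˣ) {Y : A} {c : R} (h : ↑u * Y = c • (Y * ↑u)) :
    Y * ↑u⁻¹ = c • (↑u⁻¹ * Y) := by
  calc Y * ↑u⁻¹ = ↑u⁻¹ * (↑u * Y) * ↑u⁻¹ := by rw [Units.inv_mul_cancel_left]
    _ = c • (↑u⁻¹ * Y) := by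
      rw [h, mul_smul_comm, smul_mul_assoc, ← mul_assoc, mul_assoc, Units.mul_inv, mul_one]

variable {R : Type*} [CommRing R] [Algebra R A]

theorem lie_pow_mul_of_mul_eq_smul {Z Y : A} {d : R} (h : Y * Z = d • (Z * Y)) (k : ℕ) :
    ⁅Z, Z ^ k * Y⁆ = (1 - d) • (Z ^ (k + 1) * Y) := by
  rw [Ring.lie_def, mul_assoc (Z ^ k), h, mul_smul_comm, ← mul_assoc, ← mul_assoc, ← pow_succ,
    ← pow_succ', sub_smul, one_smul]

variable {ι : Type*} [Fintype ι]

theorem lie_sum_sum_pow_mul {Z Y : ι → A} {d : R} (hZZ : ∀ i j, Commute (Z i) (Z j))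
    (hZY : ∀ i j, i ≠ j → Commute (Z i) (Y j)) (hYZ : ∀ i, Y i * Z i = d • (Z i * Y i))
    (k : ℕ) : ⁅∑ i, Z i, ∑ i, Z i ^ k * Y i⁆ = (1 - d) • ∑ i, Z i ^ (k + 1) * Y i := by
  have hoff : ∀ i j, j ≠ i → ⁅Z j, Z i ^ k * Y i⁆ = 0 := fun i j hji =>
    commute_iff_lie_eq.mp (((hZZ j i).pow_right k).mul_right (hZY j i hji))
  simp only [sum_lie, lie_sum]
  rw [smul_sum]
  refine sum_congr rfl fun i _ => ?_
  rw [sum_eq_single i (fun j _ hji => hoff i j hji) (by simp),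
    lie_pow_mul_of_mul_eq_smul (hYZ i)]

theorem iterate_lie_mul_sum_mul {Z Y : ι → A} {d : R} (hZZ : ∀ i j, Commute (Z i) (Z j))
    (hZY : ∀ i j, i ≠ j → Commute (Z i) (Y j)) (hYZ : ∀ i, Y i * Z i = d • (Z i * Y i))
    {S : A} (hS : IsIdempotentElem S) (hSZ : Commute S (∑ i, Z i)) (k : ℕ) :
    (fun b => ⁅S * (∑ i, Z i) * S, b⁆)^[k] (S * (∑ i, Y i) * S)
      = (1 - d) ^ k • (S * (∑ i, Z i ^ k * Y i) * S) := by
  induction k with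
  | zero => simp
  | succ k ih =>
    rw [Function.iterate_succ_apply', ih]
    calc ⁅S * (∑ i, Z i) * S, (1 - d) ^ k • (S * (∑ i, Z i ^ k * Y i) * S)⁆
        = (1 - d) ^ k • ⁅S * (∑ i, Z i) * S, S * (∑ i, Z i ^ k * Y i) * S⁆ :=
          lie_smul ((1 - d) ^ k) _ _
      _ = (1 - d) ^ (k + 1) • (S * (∑ i, Z i ^ (k + 1) * Y i) * S) := by
        rw [hS.lie_mul_mul hSZ, lie_sum_sum_pow_mul hZZ hZY hYZ, mul_smul_comm, smul_mul_assoc,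
          smul_smul, pow_succ]

end

theorem stmt11_general {F : Type*} [Field F] {A : Type*} [Ring A] [Algebra F A]
    (q : F) (hq : q ≠ 0) (N : ℕ) (X Xi Y : Fin N → A)
    (hXinv : ∀ i, X i * Xi i = 1 ∧ Xi i * X i = 1)
    (hXX : ∀ i j, Commute (X i) (X j))
    (hXY : ∀ i j, X i * Y j = (if i = j then q⁻¹ else 1) • (Y j * X i))
    (S : A) (hS : S * S = S)
    (hSX : Commute S (∑ i, X i)) (hSXi : Commute S (∑ i, Xi i))
    (k : ℕ) :
    ((fun b => S * (∑ i, X i) * S * b - b * (S * (∑ i, X i) * S))^[k]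
        (S * (∑ i, Y i) * S)
      = (1 - q) ^ k • (S * (∑ i, X i ^ k * Y i) * S))
    ∧ ((fun b => S * (∑ i, Xi i) * S * b - b * (S * (∑ i, Xi i) * S))^[k]
        (S * (∑ i, Y i) * S)
      = (1 - q⁻¹) ^ k • (S * (∑ i, Xi i ^ k * Y i) * S)) := by
  let u : Fin N → Aˣ := fun i => ⟨X i, Xi i, (hXinv i).1, (hXinv i).2⟩
  have hXY_off : ∀ i j, i ≠ j → Commute (X i) (Y j) := fun i j hij => by
    simpa [Commute, SemiconjBy, hij] using hXY i j
  have hXY_diag : ∀ i, X i * Y i = q⁻¹ • (Y i * X i) := fun i => by simpa using hXY i i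
  have hYX : ∀ i, Y i * X i = q • (X i * Y i) := fun i => by
    rw [hXY_diag, smul_inv_smul₀ hq]
  have hXiXi : ∀ i j, Commute (Xi i) (Xi j) := fun i j =>
    ((hXX i j).units_inv_right (u := u j)).units_inv_left (u := u i)
  have hXiY_off : ∀ i j, i ≠ j → Commute (Xi i) (Y j) := fun i j hij =>
    (hXY_off i j hij).units_inv_left (u := u i)
  have hYXi : ∀ i, Y i * Xi i = q⁻¹ • (Xi i * Y i) := fun i =>
    (u i).mul_inv_eq_smul_of_mul_eq_smul (hXY_diag i)
  simp only [← Ring.lie_def]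
  exact ⟨iterate_lie_mul_sum_mul hXX hXY_off hYX hS hSX k,
    iterate_lie_mul_sum_mul hXiXi hXiY_off hYXi hS hSXi k⟩

/-- In the `v = 1` degeneration of DAHA: with `X i`, `Y i` pairwise commuting
families, `X i Y j = q^{-δ_{ij}} Y j X i`, inverses `Xi i` of `X i`, and an
idempotent `S` commuting with `Σ Xᵢ^{±1}` and `Σ Yᵢ^{±1}`, setting
`P_{±1} = S(Σ Xᵢ^{±1})S` and `Q₁ = S(Σ Yᵢ)S`, one has
`(ad P_{±1})^k Q₁ = (1 - q^{±1})^k · S(Σ Xᵢ^{±k} Yᵢ)S`. -/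
theorem stmt11 {F : Type*} [Field F] {A : Type*} [Ring A] [Algebra F A]
    (q : F) (hq : q ≠ 0) (N : ℕ) (X Xi Y Yi : Fin N → A)
    (hXinv : ∀ i, X i * Xi i = 1 ∧ Xi i * X i = 1)
    (hYinv : ∀ i, Y i * Yi i = 1 ∧ Yi i * Y i = 1)
    (hXX : ∀ i j, Commute (X i) (X j))
    (hYY : ∀ i j, Commute (Y i) (Y j))
    (hXY : ∀ i j, X i * Y j = (if i = j then q⁻¹ else 1) • (Y j * X i))
    (S : A) (hS : S * S = S)
    (hSX : Commute S (∑ i, X i)) (hSXi : Commute S (∑ i, Xi i))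
    (hSY : Commute S (∑ i, Y i)) (hSYi : Commute S (∑ i, Yi i))
    (k : ℕ) :
    ((fun b => S * (∑ i, X i) * S * b - b * (S * (∑ i, X i) * S))^[k]
        (S * (∑ i, Y i) * S)
      = (1 - q) ^ k • (S * (∑ i, X i ^ k * Y i) * S))
    ∧ ((fun b => S * (∑ i, Xi i) * S * b - b * (S * (∑ i, Xi i) * S))^[k]
        (S * (∑ i, Y i) * S)
      = (1 - q⁻¹) ^ k • (S * (∑ i, Xi i ^ k * Y i) * S)) :=
  stmt11_general q hq N X Xi Y hXinv hXX hXY S hS hSX hSXi k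
end

section
/- Suppose q₁^{1-r}q₃^{k+1} = 1 with k ≥ 1, r ≥ 2 integers, and assume q₁^n q₃^m = 1 iff (n,m) = α(1-r, k+1) for some integer α. Let λ be a (k,r)-admissible partition of length N (i.e., λ_i - λ_{i+k} ≥ r for 1 ≤ i ≤ N-k) and suppose λ + 1_i is also (k,r)-admissible. Then for all 1 ≤ m < i, q₁^{λ_i - λ_m} q₃^{i-m} ≠ 1 and q₁^{λ_i - λ_m + 1} q₃^{i-m} ≠ 1. -/
/-- Chaining the admissibility condition `a` times. -/
lemma chain13 (f : ℕ → ℤ) (k N : ℕ) (r : ℤ)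
    (h : ∀ j, 1 ≤ j → j + k ≤ N → r ≤ f j - f (j + k)) :
    ∀ (a m : ℕ), 1 ≤ m → m + a * k ≤ N → (a : ℤ) * r ≤ f m - f (m + a * k) := by
  intro a
  induction a with
  | zero => intro m _ _; simp
  | succ a ih =>
    intro m hm hN
    have hN' : m + k + a * k ≤ N := by
      have : m + (a + 1) * k = m + k + a * k := by ring
      omega
    have h1 : r ≤ f m - f (m + k) := h m hm (by omega)
    have h2 : (a : ℤ) * r ≤ f (m + k) - f (m + k + a * k) := ih (m + k) (by omega) hN'
    have he : m + (a + 1) * k = m + k + a * k := by ring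
    rw [he]
    push_cast
    linarith

/-- Resonance case `q₁^{1-r} q₃^{k+1} = 1` with the genericity assumption that
`q₁^n q₃^m = 1` iff `(n,m) = α(1-r, k+1)`.  If `λ` and `λ + 1_i` are both
`(k,r)`-admissible partitions of length `N`, then for all `1 ≤ m < i` neither
`q₁^{λ_i - λ_m} q₃^{i-m}` nor `q₁^{λ_i - λ_m + 1} q₃^{i-m}` equals `1`. -/
theorem stmt13 (q₁ q₃ : ℂ) (h₁ : q₁ ≠ 0) (h₃ : q₃ ≠ 0) (k r : ℕ)
    (hk : 1 ≤ k) (hr : 2 ≤ r)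
    (hres : q₁ ^ ((1 : ℤ) - r) * q₃ ^ ((k : ℤ) + 1) = 1)
    (hgen : ∀ n m : ℤ, q₁ ^ n * q₃ ^ m = 1 ↔
      ∃ α : ℤ, n = α * (1 - r) ∧ m = α * ((k : ℤ) + 1))
    (N : ℕ) (lam : ℕ → ℤ)
    (hdec : ∀ a b, 1 ≤ a → a ≤ b → b ≤ N → lam b ≤ lam a)
    (hadm : ∀ j, 1 ≤ j → j + k ≤ N → (r : ℤ) ≤ lam j - lam (j + k))
    (i : ℕ) (hi1 : 1 ≤ i) (hiN : i ≤ N)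
    -- `λ + 1_i` is weakly decreasing and `(k,r)`-admissible:
    (hdec' : ∀ a b, 1 ≤ a → a ≤ b → b ≤ N →
      (if b = i then lam b + 1 else lam b) ≤ (if a = i then lam a + 1 else lam a))
    (hadm' : ∀ j, 1 ≤ j → j + k ≤ N →
      (r : ℤ) ≤ (if j = i then lam j + 1 else lam j)
        - (if j + k = i then lam (j + k) + 1 else lam (j + k)))
    (m : ℕ) (hm1 : 1 ≤ m) (hmi : m < i) :
    q₁ ^ (lam i - lam m) * q₃ ^ ((i : ℤ) - (m : ℤ)) ≠ 1
    ∧ q₁ ^ (lam i - lam m + 1) * q₃ ^ ((i : ℤ) - (m : ℤ)) ≠ 1 := by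
  constructor
  · intro hone
    obtain ⟨α, hα1, hα2⟩ := (hgen _ _).mp hone
    have hαpos : 0 < α := by
      have : (0 : ℤ) < (i : ℤ) - (m : ℤ) := by omega
      nlinarith [hα2, (by positivity : (0:ℤ) < (k:ℤ) + 1)]
    set a := α.toNat with ha
    have haα : (a : ℤ) = α := Int.toNat_of_nonneg hαpos.le
    have hia : i = m + a * (k + 1) := by
      have : (i : ℤ) = (m : ℤ) + (a : ℤ) * ((k : ℤ) + 1) := by rw [haα]; linarith
      exact_mod_cast this
    have ha1 : 1 ≤ a := by omega
    have hmk : m + a * k ≤ i := by nlinarith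
    have hch : (a : ℤ) * r ≤ lam m - lam (m + a * k) :=
      chain13 lam k N (r : ℤ) hadm a m hm1 (hmk.trans hiN)
    have hd : lam i ≤ lam (m + a * k) := hdec (m + a * k) i (by omega) hmk hiN
    have hl : lam m - lam i = (a : ℤ) * ((r : ℤ) - 1) := by rw [haα]; linarith
    have : (a : ℤ) * r ≤ (a : ℤ) * ((r : ℤ) - 1) := by linarith
    have h2r : (2 : ℤ) ≤ r := by exact_mod_cast hr
    nlinarith
  · intro hone
    obtain ⟨α, hα1, hα2⟩ := (hgen _ _).mp hone
    have hαpos : 0 < α := by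
      have : (0 : ℤ) < (i : ℤ) - (m : ℤ) := by omega
      nlinarith [hα2, (by positivity : (0:ℤ) < (k:ℤ) + 1)]
    set a := α.toNat with ha
    have haα : (a : ℤ) = α := Int.toNat_of_nonneg hαpos.le
    have hia : i = m + a * (k + 1) := by
      have : (i : ℤ) = (m : ℤ) + (a : ℤ) * ((k : ℤ) + 1) := by rw [haα]; linarith
      exact_mod_cast this
    have ha1 : 1 ≤ a := by omega
    have hmk : m + a * k ≤ i := by nlinarith
    set f : ℕ → ℤ := fun j => if j = i then lam j + 1 else lam j with hf
    have hch : (a : ℤ) * r ≤ f m - f (m + a * k) :=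
      chain13 f k N (r : ℤ) hadm' a m hm1 (hmk.trans hiN)
    have hd : f i ≤ f (m + a * k) := hdec' (m + a * k) i (by omega) hmk hiN
    have hne : m ≠ i := by omega
    have hfm : f m = lam m := by simp [hf, hne]
    have hfi : f i = lam i + 1 := by simp [hf]
    have hl : lam m - lam i = (a : ℤ) * ((r : ℤ) - 1) + 1 := by rw [haα]; linarith
    have : (a : ℤ) * r ≤ (a : ℤ) * ((r : ℤ) - 1) := by
      rw [hfm] at hch
      linarith
    have h2r : (2 : ℤ) ≤ r := by exact_mod_cast hr
    nlinarith
end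

section
/- Let λ be a (k,r)-admissible partition with λ + 1_i (k,r)-admissible, and let 1 ≤ m < i with i - m = α(k+1) for a positive integer α. Then λ_i - λ_m ≤ -1 - αr < α(1-r), using the chain λ_i + 1 ≤ λ_{i-αk} - αr = λ_{m+α} - αr ≤ λ_m - αr. -/
/-- If `λ` is `(k,r)`-admissible with `λ + 1_i` also `(k,r)`-admissible, and
`1 ≤ m < i` with `i - m = α(k+1)` for a positive integer `α`, then
`λ_i - λ_m ≤ -1 - αr < α(1-r)`. -/
theorem stmt14 (k r α : ℕ) (hk : 1 ≤ k) (hr : 2 ≤ r) (hα : 1 ≤ α)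
    (N : ℕ) (lam : ℕ → ℤ)
    (hdec : ∀ a b, 1 ≤ a → a ≤ b → b ≤ N → lam b ≤ lam a)
    (hadm : ∀ j, 1 ≤ j → j + k ≤ N → (r : ℤ) ≤ lam j - lam (j + k))
    (i m : ℕ) (hiN : i ≤ N) (hm1 : 1 ≤ m) (him : i = m + α * (k + 1))
    -- `λ + 1_i` is weakly decreasing and `(k,r)`-admissible:
    (hdec' : ∀ a b, 1 ≤ a → a ≤ b → b ≤ N →
      (if b = i then lam b + 1 else lam b) ≤ (if a = i then lam a + 1 else lam a))
    (hadm' : ∀ j, 1 ≤ j → j + k ≤ N →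
      (r : ℤ) ≤ (if j = i then lam j + 1 else lam j)
        - (if j + k = i then lam (j + k) + 1 else lam (j + k))) :
    lam i - lam m ≤ -1 - (α : ℤ) * r ∧ (-1 - (α : ℤ) * r) < (α : ℤ) * (1 - r) := by
  have key : ∀ t, 1 ≤ t → t ≤ α →
      lam i + 1 ≤ lam (m + α + (α - t) * k) - (t : ℤ) * r := by
    intro t ht1 htα
    induction t with
    | zero => omega
    | succ t ih =>
      rcases Nat.eq_or_lt_of_le ht1 with h1 | h1
      · -- t + 1 = 1, base case
        have ht0 : t = 0 := by omega
        subst ht0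
        set j := m + α + (α - 1) * k with hj
        have hjk : j + k = i := by
          have : α - 1 + 1 = α := by omega
          simp only [hj, him]
          nlinarith [Nat.sub_add_cancel hα]
        have hji : j ≠ i := by omega
        have h := hadm' j (by omega) (by omega)
        rw [hjk] at h
        simp only [hji, if_false, if_pos rfl, if_true] at h
        push_cast
        linarith
      · -- step: t ≥ 1
        have ht1' : 1 ≤ t := by omega
        have ih' := ih ht1' (by omega)
        set j := m + α + (α - (t + 1)) * k with hj
        have hjk : j + k = m + α + (α - t) * k := by
          have : α - (t + 1) + 1 = α - t := by omega
          simp only [hj]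
          nlinarith [this]
        have hi' : i = m + α + α * k := by rw [him]; ring
        have hmul : (α - t) * k ≤ α * k := Nat.mul_le_mul_right k (by omega)
        have h := hadm j (by omega) (by rw [hjk]; omega)
        rw [hjk] at h
        push_cast
        push_cast at ih'
        linarith
  have hkey := key α hα le_rfl
  simp only [Nat.sub_self, Nat.zero_mul, Nat.add_zero] at hkey
  have hi' : i = m + α + α * k := by rw [him]; ring
  have hmono : lam (m + α) ≤ lam m := hdec m (m + α) hm1 (by omega) (by omega)
  constructor
  · linarith
  · have : (1 : ℤ) ≤ (α : ℤ) := by exact_mod_cast hα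
    nlinarith
end
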